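/- Let θ ∈ H^∞(𝔻ⁿ) be inner with Q_θ = H²(𝔻ⁿ) ⊖ θH²(𝔻ⁿ). If A ∈ B(Q_θ) and the operator AP_{Q_θ} on H²(𝔻ⁿ) is a Toeplitz operator T_ψ with symbol ψ ∈ L^∞(𝕋ⁿ), then ψθ = 0 a.e. on 𝕋ⁿ, and hence A = 0. -/

import Mathlib

open MeasureTheory Filter Topology ContinuousLinearMap

noncomputable section

/-- The circle group `ℝ / 2πℤ`. -/
abbrev OneTorus : Type := AddCircle (2 * Real.pi)

instance : Fact (0 < 2 * Real.pi) := ⟨by positivity⟩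

/-- Normalized Haar (Lebesgue) measure on the circle. -/
abbrev torusMeasure : Measure OneTorus := AddCircle.haarAddCircle

/-- The `n`-torus `𝕋ⁿ`. -/
abbrev Torus (n : ℕ) : Type := Fin n → OneTorus

/-- Normalized Lebesgue measure on the `n`-torus. -/
abbrev torusMeasureN (n : ℕ) : Measure (Torus n) := Measure.pi fun _ => torusMeasure

/-- The character `e^{i⟨k,θ⟩}` on the `n`-torus. -/
def torusChar {n : ℕ} (k : Fin n → ℤ) (x : Torus n) : ℂ := ∏ j, fourier (k j) (x j)

theorem torusChar_continuous {n : ℕ} (k : Fin n → ℤ) : Continuous (torusChar k) := by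
  unfold torusChar
  exact continuous_finset_prod _ fun j _ => (fourier (k j)).continuous.comp (continuous_apply j)

theorem torusChar_norm_le {n : ℕ} (k : Fin n → ℤ) (x : Torus n) : ‖torusChar k x‖ ≤ 1 := by
  unfold torusChar
  calc ‖∏ j, fourier (k j) (x j)‖ = ∏ j, ‖fourier (k j) (x j)‖ := by
        simp [norm_prod]
    _ ≤ 1 := by
        apply Finset.prod_le_one (fun j _ => norm_nonneg _)
        intro j _
        simp [fourier_apply, Circle.norm_coe]

theorem torusChar_memℒp {n : ℕ} (k : Fin n → ℤ) (p : ENNReal) :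
    MemLp (torusChar k) p (torusMeasureN n) :=
  MemLp.mono_exponent
    (memLp_top_of_bound (torusChar_continuous k).aestronglyMeasurable 1
      (Filter.Eventually.of_forall (torusChar_norm_le k))) le_top

/-- The character as an element of `L²(𝕋ⁿ)`. -/
def torusCharLp {n : ℕ} (k : Fin n → ℤ) : Lp ℂ 2 (torusMeasureN n) :=
  (torusChar_memℒp k 2).toLp (torusChar k)

/-- The Hardy space `H²(𝔻ⁿ)`, identified with the closed subspace of `L²(𝕋ⁿ)`
spanned by the characters with nonnegative frequencies. -/
def HardyPolydisc (n : ℕ) : Submodule ℂ (Lp ℂ 2 (torusMeasureN n)) :=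
  (Submodule.span ℂ
    (Set.range fun k : Fin n → ℕ => torusCharLp fun j => (k j : ℤ))).topologicalClosure

instance {n : ℕ} : CompleteSpace (HardyPolydisc n) :=
  IsComplete.completeSpace_coe (Submodule.isClosed_topologicalClosure _).isComplete

/-- The orthogonal projection of `L²(𝕋ⁿ)` onto `H²(𝔻ⁿ)`. -/
def hardyProj (n : ℕ) : Lp ℂ 2 (torusMeasureN n) →L[ℂ] HardyPolydisc n :=
  Submodule.orthogonalProjectionOnto (HardyPolydisc n)

/-- Multiplication by a scalar `L^∞` function, as a bounded operator on a vector-valued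
`L²` space. -/
def mulLp {α : Type*} [MeasurableSpace α] {μ : Measure α} {E : Type*}
    [NormedAddCommGroup E] [NormedSpace ℂ E]
    (φ : α → ℂ) (hφ : MemLp φ ⊤ μ) : Lp E 2 μ →L[ℂ] Lp E 2 μ :=
  LinearMap.mkContinuous
    { toFun := fun f => ((Lp.memLp f).smul (r := 2) hφ).toLp (φ • ⇑f)
      map_add' := fun f g => by
        apply Lp.ext
        filter_upwards [MemLp.coeFn_toLp ((Lp.memLp (f + g)).smul (r := 2) hφ),
          MemLp.coeFn_toLp ((Lp.memLp f).smul (r := 2) hφ),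
          MemLp.coeFn_toLp ((Lp.memLp g).smul (r := 2) hφ),
          Lp.coeFn_add f g,
          Lp.coeFn_add (((Lp.memLp f).smul (r := 2) hφ).toLp (φ • ⇑f))
            (((Lp.memLp g).smul (r := 2) hφ).toLp (φ • ⇑g))] with x h1 h2 h3 h4 h5
        simp only [h1, h5, Pi.add_apply, h2, h3, Pi.smul_apply, Pi.smul_apply', h4, smul_add]
      map_smul' := fun c f => by
        apply Lp.ext
        filter_upwards [MemLp.coeFn_toLp ((Lp.memLp (c • f)).smul (r := 2) hφ),
          MemLp.coeFn_toLp ((Lp.memLp f).smul (r := 2) hφ),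
          Lp.coeFn_smul c f,
          Lp.coeFn_smul c (((Lp.memLp f).smul (r := 2) hφ).toLp (φ • ⇑f))]
          with x h1 h2 h3 h4
        simp only [h1, h4, Pi.smul_apply, Pi.smul_apply', h2, h3, RingHom.id_apply]
        rw [smul_comm] }
    (eLpNorm φ ⊤ μ).toReal (fun f => by
      simp only [LinearMap.coe_mk, AddHom.coe_mk]
      rw [Lp.norm_toLp, Lp.norm_def, ← ENNReal.toReal_mul]
      refine ENNReal.toReal_mono ?_ ?_
      · exact ENNReal.mul_ne_top hφ.eLpNorm_lt_top.ne (Lp.memLp f).eLpNorm_lt_top.ne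
      · exact eLpNorm_smul_le_eLpNorm_top_mul_eLpNorm 2 (Lp.aestronglyMeasurable f) φ)

/-- The operator `T_{z_j}` of multiplication by the coordinate function `z_j`
on `H²(𝔻ⁿ)` (realized as the compression to the invariant subspace `H²(𝔻ⁿ)`). -/
def hardyShift (n : ℕ) (j : Fin n) : HardyPolydisc n →L[ℂ] HardyPolydisc n :=
  (hardyProj n) ∘L (mulLp (torusChar (Pi.single j 1)) (torusChar_memℒp _ ⊤)) ∘L
    (HardyPolydisc n).subtypeL

/-- `T` is a Toeplitz operator on `H²(𝔻ⁿ)`: `T = P_{H²} M_φ |_{H²}` for some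
`φ ∈ L^∞(𝕋ⁿ)`. -/
def IsToeplitzOp {n : ℕ} (T : HardyPolydisc n →L[ℂ] HardyPolydisc n) : Prop :=
  ∃ (φ : Torus n → ℂ) (hφ : MemLp φ ⊤ (torusMeasureN n)),
    ∀ f : HardyPolydisc n, T f = hardyProj n (mulLp φ hφ (f : Lp ℂ 2 (torusMeasureN n)))

/-- The Toeplitz operator `T_φ = P_{H²(𝔻ⁿ)} M_φ |_{H²(𝔻ⁿ)}` with symbol `φ ∈ L^∞(𝕋ⁿ)`. -/
def toeplitzOp {n : ℕ} (φ : Torus n → ℂ) (hφ : MemLp φ ⊤ (torusMeasureN n)) :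
    HardyPolydisc n →L[ℂ] HardyPolydisc n :=
  (hardyProj n) ∘L (mulLp φ hφ) ∘L (HardyPolydisc n).subtypeL

section ModelSpace

variable {n : ℕ} (θ : Torus n → ℂ) (hθ : MemLp θ ⊤ (torusMeasureN n))
  (hmap : ∀ f : HardyPolydisc n, mulLp θ hθ (f : Lp ℂ 2 (torusMeasureN n)) ∈ HardyPolydisc n)

/-- The subspace `θ H²(𝔻ⁿ)` of `H²(𝔻ⁿ)`, for `θ ∈ H^∞(𝔻ⁿ)` (encoded by the hypothesis
`hmap` that multiplication by `θ` preserves `H²(𝔻ⁿ)`). -/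
def thetaRange : Submodule ℂ (HardyPolydisc n) :=
  LinearMap.range
    ((((mulLp θ hθ) ∘L (HardyPolydisc n).subtypeL).codRestrict (HardyPolydisc n)
        fun f => hmap f) : HardyPolydisc n →ₗ[ℂ] HardyPolydisc n)

/-- The Beurling-type quotient (model) space `Q_θ = H²(𝔻ⁿ) ⊖ θ H²(𝔻ⁿ)`. -/
def modelSpace : Submodule ℂ (HardyPolydisc n) := (thetaRange θ hθ hmap)ᗮ

instance : CompleteSpace (modelSpace θ hθ hmap) :=
  IsComplete.completeSpace_coe (Submodule.isClosed_orthogonal _).isComplete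

/-- The compression `C_{z_i} = P_{Q_θ} T_{z_i}|_{Q_θ}` of the coordinate shift to the
model space. -/
def modelShift (i : Fin n) : modelSpace θ hθ hmap →L[ℂ] modelSpace θ hθ hmap :=
  Submodule.orthogonalProjectionOnto (modelSpace θ hθ hmap) ∘L hardyShift n i ∘L
    (modelSpace θ hθ hmap).subtypeL

/-- The adjoint `C_{z_i}^*`. -/
def modelShiftStar (i : Fin n) : modelSpace θ hθ hmap →L[ℂ] modelSpace θ hθ hmap :=
  ContinuousLinearMap.adjoint (𝕜 := ℂ) (E := ↥(modelSpace θ hθ hmap))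
    (F := ↥(modelSpace θ hθ hmap)) (modelShift θ hθ hmap i)

end ModelSpace

open MeasureTheory Filter Topology ContinuousLinearMap Set Submodule ComplexConjugate
open scoped ENNReal

variable {n : ℕ}

theorem torusChar_zero (x : Torus n) : torusChar (0 : Fin n → ℤ) x = 1 := by
  unfold torusChar; simp [fourier_zero]

theorem torusChar_add (k l : Fin n → ℤ) (x : Torus n) :
    torusChar (k + l) x = torusChar k x * torusChar l x := by
  unfold torusChar
  rw [← Finset.prod_mul_distrib]
  exact Finset.prod_congr rfl fun j _ => fourier_add

theorem torusChar_neg (k : Fin n → ℤ) (x : Torus n) :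
    torusChar (-k) x = conj (torusChar k x) := by
  unfold torusChar
  rw [map_prod]
  exact Finset.prod_congr rfl fun j _ => fourier_neg

/-- The character as a continuous map. -/
def torusCharCM (k : Fin n → ℤ) : C(Torus n, ℂ) := ⟨torusChar k, torusChar_continuous k⟩

def torusSubalgebra (n : ℕ) : StarSubalgebra ℂ C(Torus n, ℂ) where
  toSubalgebra := Algebra.adjoin ℂ (range torusCharCM)
  star_mem' := by
    show Algebra.adjoin ℂ (range (torusCharCM (n := n))) ≤
      star (Algebra.adjoin ℂ (range (torusCharCM (n := n))))
    refine Algebra.adjoin_le ?_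
    rintro - ⟨k, rfl⟩
    exact Algebra.subset_adjoin ⟨-k, ContinuousMap.ext fun x => torusChar_neg k x⟩

theorem torusSubalgebra_coe :
    Subalgebra.toSubmodule (torusSubalgebra n).toSubalgebra =
      span ℂ (range (torusCharCM (n := n))) := by
  apply Algebra.adjoin_eq_span_of_subset
  refine Subset.trans ?_ Submodule.subset_span
  intro x hx
  refine Submonoid.closure_induction (fun _ => id) ⟨0, ?_⟩ ?_ hx
  · ext1 z; exact torusChar_zero z
  · rintro - - - - ⟨k, rfl⟩ ⟨l, rfl⟩
    exact ⟨k + l, ContinuousMap.ext fun z => torusChar_add k l z⟩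

theorem torusSubalgebra_separatesPoints : (torusSubalgebra n).SeparatesPoints := by
  intro x y hxy
  obtain ⟨j, hj⟩ : ∃ j, x j ≠ y j := by
    by_contra h; push_neg at h; exact hxy (funext h)
  refine ⟨_, ⟨torusCharCM (Pi.single j 1), Algebra.subset_adjoin ⟨Pi.single j 1, rfl⟩, rfl⟩, ?_⟩
  have key : ∀ z : Torus n, torusCharCM (Pi.single j 1) z = fourier 1 (z j) := by
    intro z
    show (∏ i, fourier ((Pi.single j 1 : Fin n → ℤ) i) (z i)) = _
    rw [Finset.prod_eq_single j]
    · simp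
    · intro i _ hi; simp [Pi.single_eq_of_ne hi, fourier_zero]
    · simp
  dsimp only
  rw [key, key, fourier_one, fourier_one]
  contrapose! hj
  rw [Circle.coe_inj] at hj
  exact AddCircle.injective_toCircle (by positivity : (0:ℝ) < 2 * Real.pi).ne' hj

theorem torusSubalgebra_closure_eq_top : (torusSubalgebra n).topologicalClosure = ⊤ :=
  ContinuousMap.starSubalgebra_topologicalClosure_eq_top_of_separatesPoints _
    torusSubalgebra_separatesPoints

theorem span_torusCharCM_closure_eq_top :
    (span ℂ (range (torusCharCM (n := n)))).topologicalClosure = ⊤ := by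
  rw [← torusSubalgebra_coe]
  exact congr_arg (Subalgebra.toSubmodule <| StarSubalgebra.toSubalgebra ·)
    torusSubalgebra_closure_eq_top

theorem torusCharLp_eq (k : Fin n → ℤ) :
    torusCharLp k = ContinuousMap.toLp (E := ℂ) 2 (torusMeasureN n) ℂ (torusCharCM k) := by
  apply Lp.ext
  filter_upwards [MemLp.coeFn_toLp (torusChar_memℒp k 2),
    ContinuousMap.coeFn_toLp (p := 2) (torusMeasureN n) (𝕜 := ℂ) (torusCharCM k)] with x h1 h2
  rw [torusCharLp, h1, h2]; rfl

theorem span_torusCharLp_closure_eq_top :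
    (span ℂ (range (torusCharLp (n := n)))).topologicalClosure = ⊤ := by
  have := (ContinuousMap.toLp_denseRange ℂ (torusMeasureN n) ℂ
      (by norm_num : (2 : ℝ≥0∞) ≠ ∞)).topologicalClosure_map_submodule
      span_torusCharCM_closure_eq_top
  convert this using 2
  · rfl
  erw [map_span]
  congr 1
  rw [← Set.range_comp]
  exact congrArg _ (funext fun k => torusCharLp_eq k)

theorem mulLp_apply {α : Type*} [MeasurableSpace α] {μ : Measure α}
    (φ : α → ℂ) (hφ : MemLp φ ⊤ μ) (f : Lp ℂ 2 μ) :
    mulLp (E := ℂ) φ hφ f = ((Lp.memLp f).smul (r := 2) hφ).toLp (φ • ⇑f) := rfl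

theorem mulLp_coeFn {α : Type*} [MeasurableSpace α] {μ : Measure α}
    (φ : α → ℂ) (hφ : MemLp φ ⊤ μ) (f : Lp ℂ 2 μ) :
    ⇑(mulLp (E := ℂ) φ hφ f) =ᵐ[μ] φ • ⇑f := by
  rw [mulLp_apply]; exact MemLp.coeFn_toLp _

/-- Let `θ ∈ H^∞(𝔻ⁿ)` be inner and `A ∈ B(Q_θ)`. If the operator `A P_{Q_θ}` on
`H²(𝔻ⁿ)` is a Toeplitz operator `T_ψ` with symbol `ψ ∈ L^∞(𝕋ⁿ)`, then `ψ θ = 0` a.e.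
on `𝕋ⁿ`, and hence `A = 0`. -/
theorem modelSpace_toeplitz_symbol_vanishes {n : ℕ} (θ : Torus n → ℂ)
    (hθ : MemLp θ ⊤ (torusMeasureN n))
    (hunim : ∀ᵐ x ∂(torusMeasureN n), ‖θ x‖ = 1)
    (hmap : ∀ f : HardyPolydisc n, mulLp θ hθ (f : Lp ℂ 2 (torusMeasureN n)) ∈ HardyPolydisc n)
    (A : modelSpace θ hθ hmap →L[ℂ] modelSpace θ hθ hmap)
    (ψ : Torus n → ℂ) (hψ : MemLp ψ ⊤ (torusMeasureN n))
    (hAP : ∀ f : HardyPolydisc n,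
      (modelSpace θ hθ hmap).subtype (A (Submodule.orthogonalProjectionOnto (modelSpace θ hθ hmap) f)) =
        toeplitzOp ψ hψ f) :
    ((fun x => ψ x * θ x) =ᵐ[torusMeasureN n] 0) ∧ A = 0 := by
  classical
  have hmem : ∀ k : Fin n → ℕ, torusCharLp (fun j => (k j : ℤ)) ∈ HardyPolydisc n := fun k =>
    Submodule.le_topologicalClosure _ (Submodule.subset_span ⟨k, rfl⟩)
  have hhtop : MemLp (fun x => ψ x * θ x) ⊤ (torusMeasureN n) := hθ.smul (r := ⊤) hψ
  have hh : MemLp (fun x => ψ x * θ x) 2 (torusMeasureN n) := hhtop.mono_exponent le_top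
  have key : ∀ l : Fin n → ℤ,
      inner (𝕜 := ℂ) (torusCharLp l) (hh.toLp _) = 0 := by
    intro l
    obtain ⟨k, hk⟩ : ∃ k : Fin n → ℕ, k = fun j => (-(l j)).toNat := ⟨_, rfl⟩
    obtain ⟨m, hm⟩ : ∃ m : Fin n → ℕ, m = fun j => (l j).toNat := ⟨_, rfl⟩
    have hlm : ∀ j, (m j : ℤ) - (k j : ℤ) = l j := fun j => by rw [hk, hm]; exact Int.toNat_sub_toNat_neg (l j)
    obtain ⟨g, hg⟩ : ∃ g : HardyPolydisc n, g = ⟨torusCharLp (fun j => (k j : ℤ)), hmem k⟩ :=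
      ⟨_, rfl⟩
    have hF : (⟨mulLp θ hθ (g : Lp ℂ 2 (torusMeasureN n)), hmap g⟩ : HardyPolydisc n) ∈
        thetaRange θ hθ hmap := ⟨g, rfl⟩
    have hPQF : Submodule.orthogonalProjectionOnto (modelSpace θ hθ hmap)
        ⟨mulLp θ hθ (g : Lp ℂ 2 (torusMeasureN n)), hmap g⟩ = 0 :=
      Submodule.orthogonalProjectionOnto_apply_of_mem_orthogonal
        ((thetaRange θ hθ hmap).le_orthogonal_orthogonal hF)
    have h0 : toeplitzOp ψ hψ ⟨mulLp θ hθ (g : Lp ℂ 2 (torusMeasureN n)), hmap g⟩ = 0 := by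
      rw [← hAP ⟨mulLp θ hθ (g : Lp ℂ 2 (torusMeasureN n)), hmap g⟩, hPQF, ContinuousLinearMap.map_zero A]
      exact (modelSpace θ hθ hmap).subtype.map_zero
    have h0' : hardyProj n (mulLp ψ hψ (mulLp θ hθ (g : Lp ℂ 2 (torusMeasureN n)))) = 0 := h0
    have hperp : mulLp ψ hψ (mulLp θ hθ (g : Lp ℂ 2 (torusMeasureN n))) ∈ (HardyPolydisc n)ᗮ :=
      Submodule.orthogonalProjectionOnto_eq_zero_iff.mp h0'
    have hinner := (Submodule.mem_orthogonal _ _).mp hperp _ (hmem m)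
    rw [← hinner]
    rw [MeasureTheory.L2.inner_def, MeasureTheory.L2.inner_def]
    apply integral_congr_ae
    have c1 := MemLp.coeFn_toLp hh
    have c2 : ⇑(torusCharLp l) =ᵐ[torusMeasureN n] torusChar l :=
      MemLp.coeFn_toLp (torusChar_memℒp l 2)
    have c3 : ⇑(torusCharLp (fun j => (m j : ℤ))) =ᵐ[torusMeasureN n]
        torusChar (fun j => (m j : ℤ)) :=
      MemLp.coeFn_toLp (torusChar_memℒp (fun j => (m j : ℤ)) 2)
    have c4 := mulLp_coeFn ψ hψ (mulLp θ hθ (g : Lp ℂ 2 (torusMeasureN n)))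
    have c5 := mulLp_coeFn θ hθ (g : Lp ℂ 2 (torusMeasureN n))
    have c6 : ⇑((g : Lp ℂ 2 (torusMeasureN n))) =ᵐ[torusMeasureN n]
        torusChar (fun j => (k j : ℤ)) := by
      rw [hg]; exact MemLp.coeFn_toLp (torusChar_memℒp (fun j => (k j : ℤ)) 2)
    filter_upwards [c1, c2, c3, c4, c5, c6] with x h1 h2 h3 h4 h5 h6
    simp only [RCLike.inner_apply]
    rw [h1, h2, h3, h4]
    simp only [Pi.smul_apply, Pi.mul_apply, smul_eq_mul, h5, h6]
    have e1 : (starRingEnd ℂ) (torusChar l x) = torusChar (-l) x := (torusChar_neg l x).symm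
    have e2 : (starRingEnd ℂ) (torusChar (fun j => (m j : ℤ)) x) =
        torusChar (-(fun j => (m j : ℤ))) x := (torusChar_neg _ x).symm
    rw [e1, e2]
    have e3 : ψ x * (θ x * torusChar (fun j => (k j : ℤ)) x) * torusChar (-(fun j => (m j : ℤ))) x
        = (ψ x * θ x) * (torusChar (-(fun j => (m j : ℤ))) x * torusChar (fun j => (k j : ℤ)) x) := by
      ring
    rw [e3, ← torusChar_add]
    have e4 : -(fun j => (m j : ℤ)) + (fun j => (k j : ℤ)) = -l := by
      funext j
      have := hlm j
      simp only [Pi.add_apply, Pi.neg_apply]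
      omega
    rw [e4]
  have horth : hh.toLp _ ∈ (Submodule.span ℂ (Set.range (torusCharLp (n := n))))ᗮ := by
    rw [Submodule.mem_orthogonal]
    intro u hu
    induction hu using Submodule.span_induction with
    | mem u hu => obtain ⟨l, rfl⟩ := hu; exact key l
    | zero => simp
    | add u v _ _ h1 h2 => rw [inner_add_left, h1, h2, add_zero]
    | smul c u _ h1 => rw [inner_smul_left, h1, mul_zero]
  have hbot : (Submodule.span ℂ (Set.range (torusCharLp (n := n))))ᗮ = ⊥ :=
    Submodule.topologicalClosure_eq_top_iff.mp span_torusCharLp_closure_eq_top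
  rw [hbot, Submodule.mem_bot] at horth
  have hae : (fun x => ψ x * θ x) =ᵐ[torusMeasureN n] 0 := by
    have := (MemLp.coeFn_toLp hh).symm
    rw [horth] at this
    exact this.trans (Lp.coeFn_zero _ _ _)
  have hψ0 : ψ =ᵐ[torusMeasureN n] 0 := by
    filter_upwards [hae, hunim] with x h1 h2
    have hθx : θ x ≠ 0 := fun hx => by simp [hx] at h2
    have : ψ x * θ x = 0 := h1
    rcases mul_eq_zero.mp this with h' | h'
    · exact h'
    · exact absurd h' hθx
  refine ⟨hae, ContinuousLinearMap.ext fun u => ?_⟩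
  have h1 := hAP (u : HardyPolydisc n)
  rw [Submodule.orthogonalProjectionOnto_mem_subspace_eq_self] at h1
  have h2 : mulLp ψ hψ (((u : HardyPolydisc n) : Lp ℂ 2 (torusMeasureN n))) = 0 := by
    rw [Lp.eq_zero_iff_ae_eq_zero]
    filter_upwards [mulLp_coeFn ψ hψ (((u : HardyPolydisc n) : Lp ℂ 2 (torusMeasureN n))), hψ0]
      with x hx hx2
    rw [hx]
    simp [hx2]
  have h3 : toeplitzOp ψ hψ (u : HardyPolydisc n) = 0 := by
    rw [toeplitzOp, ContinuousLinearMap.comp_apply, ContinuousLinearMap.comp_apply,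
      Submodule.subtypeL_apply, h2, map_zero]
  rw [h3] at h1
  rw [ContinuousLinearMap.zero_apply]
  exact Submodule.coe_eq_zero.mp h1
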